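/- arXiv:1603.04637 — 5 statements merged into one kernel-verified Lean document; each statement's English description precedes it below -/
import Mathlib

section
/- Let S be an invertible d×d real matrix, v ∈ ℝ^d, a ≥ 1, and f : ℝ^d → ℝ be supported in an axis-parallel cube of edge length l > 0. Then the number of points m ∈ ℤ^d with (aS)^{-⊤}(m+v) ∈ supp(f) is at most (l·‖S‖₁ + 1)^d · a^d, where ‖S‖₁ is the maximum absolute column sum of S. -/
open MeasureTheory Matrix Set

noncomputable section

/-- Maximum absolute column sum of a matrix. -/
def colNorm {d : ℕ} (S : Matrix (Fin d) (Fin d) ℝ) : ℝ :=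
  ⨆ j, ∑ i, |S i j|

/-- Lemma 1: the number of nodes `(aS)^{-⊤}(m+v)` in the support of `f` is at most
`(l‖S‖₁+1)^d a^d`. -/
theorem stmt0 {d : ℕ} (S : Matrix (Fin d) (Fin d) ℝ) (hS : IsUnit S.det)
    (v : Fin d → ℝ) (a : ℝ) (ha : 1 ≤ a) (l : ℝ) (hl : 0 < l)
    (f : (Fin d → ℝ) → ℝ) (x₀ : Fin d → ℝ)
    (hsupp : Function.support f ⊆ Set.Icc x₀ (fun i => x₀ i + l)) :
    {m : Fin d → ℤ |
        ((a • S)⁻¹)ᵀ *ᵥ (fun i => (m i : ℝ) + v i) ∈ Function.support f}.encard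
      ≤ ENNReal.ofReal ((l * colNorm S + 1) ^ d * a ^ d) := by
  have ha0 : (0:ℝ) < a := lt_of_lt_of_le one_pos ha
  have hdet : IsUnit (a • S).det := by
    rw [Matrix.det_smul]
    exact (isUnit_iff_ne_zero.2 (pow_ne_zero _ ha0.ne')).mul hS
  have hdetT : IsUnit ((a • S)ᵀ).det := by rwa [Matrix.det_transpose]
  set c : Fin d → ℝ := fun j => a * ∑ i, (S i j * x₀ i + l * min (S i j) 0) - v j with hc
  set L : Fin d → ℝ := fun j => a * l * ∑ i, |S i j| with hL
  have key : ∀ m : Fin d → ℤ,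
      (((a • S)⁻¹)ᵀ *ᵥ (fun i => (m i : ℝ) + v i) ∈ Function.support f) →
      ∀ j, (m j : ℝ) ∈ Set.Icc (c j) (c j + L j) := by
    intro m hm j
    set x := ((a • S)⁻¹)ᵀ *ᵥ (fun i => (m i : ℝ) + v i) with hxdef
    have hx : x ∈ Set.Icc x₀ (fun i => x₀ i + l) := hsupp hm
    have hxv : (a • S)ᵀ *ᵥ x = fun i => (m i : ℝ) + v i := by
      rw [hxdef, Matrix.transpose_nonsing_inv, Matrix.mulVec_mulVec,
        Matrix.mul_nonsing_inv _ hdetT, Matrix.one_mulVec]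
    have hj : (m j : ℝ) + v j = a * ∑ i, S i j * x i := by
      have := congrFun hxv j
      simp only [Matrix.mulVec, dotProduct, Matrix.transpose_apply,
        Matrix.smul_apply, smul_eq_mul] at this
      rw [← this, Finset.mul_sum]
      exact Finset.sum_congr rfl fun i _ => mul_assoc a (S i j) (x i)
    have hxl : ∀ i, x₀ i ≤ x i ∧ x i ≤ x₀ i + l := by
      intro i
      exact ⟨hx.1 i, hx.2 i⟩
    have hterm : ∀ i, S i j * x₀ i + l * min (S i j) 0 ≤ S i j * x i ∧
        S i j * x i ≤ S i j * x₀ i + l * min (S i j) 0 + l * |S i j| := by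
      intro i
      obtain ⟨h1, h2⟩ := hxl i
      rcases le_total (S i j) 0 with h | h
      · rw [min_eq_left h, abs_of_nonpos h]
        constructor <;> nlinarith
      · rw [min_eq_right h, abs_of_nonneg h]
        constructor <;> nlinarith
    have hlow : c j ≤ (m j : ℝ) := by
      have hsum : ∑ i, (S i j * x₀ i + l * min (S i j) 0) ≤ ∑ i, S i j * x i :=
        Finset.sum_le_sum fun i _ => (hterm i).1
      have h2 := mul_le_mul_of_nonneg_left hsum ha0.le
      have : c j + v j ≤ (m j : ℝ) + v j := by
        simp only [hc, hj]
        linarith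
      linarith
    have hhigh : (m j : ℝ) ≤ c j + L j := by
      have hsum : ∑ i, S i j * x i ≤
          ∑ i, (S i j * x₀ i + l * min (S i j) 0 + l * |S i j|) :=
        Finset.sum_le_sum fun i _ => (hterm i).2
      rw [Finset.sum_add_distrib, ← Finset.mul_sum] at hsum
      have h2 := mul_le_mul_of_nonneg_left hsum ha0.le
      have : (m j : ℝ) + v j ≤ c j + L j + v j := by
        simp only [hc, hL, hj]
        ring_nf
        ring_nf at h2
        linarith
      linarith
    exact ⟨hlow, hhigh⟩
  have hsub : {m : Fin d → ℤ |
        ((a • S)⁻¹)ᵀ *ᵥ (fun i => (m i : ℝ) + v i) ∈ Function.support f} ⊆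
      ↑(Fintype.piFinset fun j => Finset.Icc ⌈c j⌉ ⌊c j + L j⌋) := by
    intro m hm
    simp only [Finset.mem_coe, Fintype.mem_piFinset, Finset.mem_Icc]
    intro j
    obtain ⟨h1, h2⟩ := key m hm j
    exact ⟨Int.ceil_le.2 h1, Int.le_floor.2 h2⟩
  refine le_trans (ENat.toENNReal_le.2 (Set.encard_mono hsub)) ?_
  rw [Set.encard_coe_eq_coe_finsetCard, ENat.toENNReal_coe, Fintype.card_piFinset]
  have hcN : ∀ j : Fin d, ((Finset.Icc ⌈c j⌉ ⌊c j + L j⌋).card : ℝ) ≤ (l * colNorm S + 1) * a := by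
    intro j
    have hcol : ∑ i, |S i j| ≤ colNorm S := by
      rw [colNorm]
      exact le_ciSup (Set.Finite.bddAbove (Set.finite_range fun j => ∑ i, |S i j|)) j
    have hsumnn : (0:ℝ) ≤ ∑ i, |S i j| := Finset.sum_nonneg fun i _ => abs_nonneg _
    have hrhs : (l * colNorm S + 1) * a = l * colNorm S * a + a := by ring
    have hLb : L j + 1 ≤ (l * colNorm S + 1) * a := by
      rw [hrhs]
      simp only [hL]
      have : a * l * ∑ i, |S i j| ≤ l * colNorm S * a := by
        have := mul_le_mul_of_nonneg_left hcol (by positivity : (0:ℝ) ≤ a * l)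
        linarith [this]
      linarith
    rw [Int.card_Icc]
    rcases le_or_gt (⌊c j + L j⌋ + 1 - ⌈c j⌉) 0 with h | h
    · rw [Int.toNat_of_nonpos h]
      have : (0:ℝ) ≤ L j := by rw [hL]; positivity
      push_cast
      linarith
    · have hto : ((⌊c j + L j⌋ + 1 - ⌈c j⌉).toNat : ℝ) =
          (⌊c j + L j⌋ : ℝ) + 1 - (⌈c j⌉ : ℝ) := by
        rw [← Int.cast_natCast, Int.toNat_of_nonneg h.le]
        push_cast
        ring
      rw [hto]
      have h1 : (⌊c j + L j⌋ : ℝ) ≤ c j + L j := Int.floor_le _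
      have h2 : c j ≤ (⌈c j⌉ : ℝ) := Int.le_ceil _
      linarith
  have hfin : ((∏ j : Fin d, (Finset.Icc ⌈c j⌉ ⌊c j + L j⌋).card : ℕ) : ℝ) ≤
      (l * colNorm S + 1) ^ d * a ^ d := by
    push_cast
    rw [← mul_pow]
    calc ∏ j : Fin d, ((Finset.Icc ⌈c j⌉ ⌊c j + L j⌋).card : ℝ)
        ≤ ∏ _j : Fin d, ((l * colNorm S + 1) * a) :=
          Finset.prod_le_prod (fun j _ => by positivity) (fun j _ => hcN j)
      _ = ((l * colNorm S + 1) * a) ^ d := by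
          rw [Finset.prod_const, Finset.card_univ, Fintype.card_fin]
  rw [← ENNReal.ofReal_natCast]
  exact ENNReal.ofReal_le_ofReal hfin
end
end

section
/- Let p ∈ ℤ[x] be a monic polynomial of degree d, irreducible over ℚ, with d distinct real roots ζ₁,…,ζ_d. Then the Vandermonde matrix B = (ζ_i^{j−1})_{i,j=1}^d is invertible and satisfies |∏_{j=1}^d (Bm)_j| ≥ 1 for every m ∈ ℤ^d \ {0}. -/
open Matrix Polynomial

/-! The entries of `B m` are the values `q(ζ_j)` of the integer polynomial `q = ∑ m_k X^k`.
Since `p` is monic and splits over `ℝ` with roots `ζ_j`, their product is the resultant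
`Res(p, q) ∈ ℤ`. It is nonzero because `p` is irreducible over `ℚ` and `q ≠ 0` has smaller
degree, so `p` and `q` are coprime in `ℚ[X]`; hence its absolute value is at least `1`. -/

theorem Polynomial.aeval_ofFn {R A : Type*} [CommSemiring R] [DecidableEq R] [CommSemiring A]
    [Algebra R A] {n : ℕ} (v : Fin n → R) (x : A) :
    aeval x (ofFn n v) = ∑ i, algebraMap R A (v i) * x ^ (i : ℕ) := by
  simp [ofFn_eq_sum_monomial, aeval_monomial]

theorem Matrix.vandermonde_mulVec_algebraMap {R A : Type*} [CommSemiring R] [DecidableEq R]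
    [CommRing A] [Algebra R A] {n : ℕ} (v : Fin n → A) (c : Fin n → R) (i : Fin n) :
    (vandermonde v *ᵥ fun k => algebraMap R A (c k)) i = aeval (v i) (ofFn n c) := by
  simp [aeval_ofFn, mulVec, dotProduct, mul_comm]

namespace Polynomial

variable {R K : Type*} [CommRing R] [Field K]

theorem resultant_ne_zero_of_irreducible_map {φ : R →+* K} (hφ : Function.Injective φ)
    {f g : R[X]} (hf : Irreducible (f.map φ)) (hg : g ≠ 0) (hdeg : g.natDegree < f.natDegree) :
    f.resultant g ≠ 0 := by
  have hcop : IsCoprime (f.map φ) (g.map φ) := by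
    refine hf.coprime_iff_not_dvd.mpr fun hdvd => ?_
    have := natDegree_le_of_dvd hdvd ((Polynomial.map_ne_zero_iff hφ).mpr hg)
    rw [natDegree_map_eq_of_injective hφ, natDegree_map_eq_of_injective hφ] at this
    omega
  have := resultant_ne_zero _ _ hcop
  rwa [resultant_map_map, natDegree_map_eq_of_injective hφ, natDegree_map_eq_of_injective hφ,
    map_ne_zero_iff _ hφ] at this

variable [Algebra R K]

theorem Monic.roots_map_eq_of_injective {f : R[X]} (hf : f.Monic) {ζ : Fin f.natDegree → K}
    (hζ : Function.Injective ζ) (hroot : ∀ i, aeval (ζ i) f = 0) :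
    (f.map (algebraMap R K)).roots = Finset.univ.val.map ζ := by
  have := roots_eq_of_natDegree_le_card_of_ne_zero (p := f.map (algebraMap R K))
    (S := Finset.univ.map ⟨ζ, hζ⟩) ?_ ?_ (hf.map _).ne_zero
  · simpa using this
  · simpa [eval_map_algebraMap] using hroot
  · simp [hf.natDegree_map]

theorem Monic.prod_aeval_eq_resultant {f : R[X]} (hf : f.Monic) {ζ : Fin f.natDegree → K}
    (hζ : Function.Injective ζ) (hroot : ∀ i, aeval (ζ i) f = 0) (g : R[X]) :
    ∏ i, aeval (ζ i) g = algebraMap R K (f.resultant g) := by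
  have hroots := hf.roots_map_eq_of_injective hζ hroot
  have hsplits : (f.map (algebraMap R K)).Splits := by
    rw [splits_iff_card_roots, hroots, hf.natDegree_map]
    simp
  have := resultant_eq_prod_eval _ (g.map (algebraMap R K)) g.natDegree natDegree_map_le hsplits
  rw [hf.natDegree_map, resultant_map_map, (hf.map _).leadingCoeff, one_pow, one_mul,
    hroots] at this
  rw [this, Multiset.map_map]
  simp only [Function.comp_def, eval_map_algebraMap]
  rfl

end Polynomial

theorem stmt2_general (d : ℕ) (p : Polynomial ℤ) (hmonic : p.Monic)
    (hdeg : p.natDegree = d) (hirr : Irreducible (p.map (Int.castRingHom ℚ)))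
    (ζ : Fin d → ℝ) (hinj : Function.Injective ζ)
    (hroot : ∀ i, Polynomial.aeval (ζ i) p = 0) :
    (Matrix.of fun i j : Fin d => ζ i ^ (j : ℕ)).det ≠ 0 ∧
    ∀ m : Fin d → ℤ, m ≠ 0 →
      1 ≤ |∏ j, ((Matrix.of fun i j : Fin d => ζ i ^ (j : ℕ)) *ᵥ fun k => (m k : ℝ)) j| := by
  subst hdeg
  refine ⟨det_vandermonde_ne_zero_iff.mpr hinj, fun m hm => ?_⟩
  set q := ofFn p.natDegree m
  have hq : q ≠ 0 := (map_ne_zero_iff _ (injective_ofFn _)).mpr hm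
  have hres : p.resultant q ≠ 0 := resultant_ne_zero_of_irreducible_map Int.cast_injective hirr hq
    (ofFn_natDegree_lt (Nat.one_le_iff_ne_zero.mpr (ne_zero_of_ofFn_ne_zero hq)) m)
  have hprod : ∏ j, (vandermonde ζ *ᵥ fun k => (m k : ℝ)) j = (p.resultant q : ℝ) := by
    simp_rw [← eq_intCast (algebraMap ℤ ℝ), vandermonde_mulVec_algebraMap]
    exact hmonic.prod_aeval_eq_resultant hinj hroot q
  rw [← vandermonde.eq_def, hprod]
  exact_mod_cast Int.one_le_abs hres

/-- If `p ∈ ℤ[x]` is monic of degree `d`, irreducible over `ℚ`, with `d` distinct real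
roots `ζ₁,…,ζ_d`, then the Vandermonde matrix `B = (ζ_i^{j-1})` is invertible and
`|∏_j (Bm)_j| ≥ 1` for every nonzero `m ∈ ℤ^d`. -/
theorem stmt2 (d : ℕ) (hd : 0 < d) (p : Polynomial ℤ) (hmonic : p.Monic)
    (hdeg : p.natDegree = d) (hirr : Irreducible (p.map (Int.castRingHom ℚ)))
    (ζ : Fin d → ℝ) (hinj : Function.Injective ζ)
    (hroot : ∀ i, Polynomial.aeval (ζ i) p = 0) :
    (Matrix.of fun i j : Fin d => ζ i ^ (j : ℕ)).det ≠ 0 ∧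
    ∀ m : Fin d → ℤ, m ≠ 0 →
      1 ≤ |∏ j, ((Matrix.of fun i j : Fin d => ζ i ^ (j : ℕ)) *ᵥ fun k => (m k : ℝ)) j| :=
  stmt2_general d p hmonic hdeg hirr ζ hinj hroot
end

section
/- Let B be a Frolov matrix in dimension d (invertible; |∏_j(Bm)_j| ≥ 1 for all m ∈ ℤ^d\{0}; every axis-parallel box of volume V contains at most V+1 lattice points Bm). For r ∈ ℕ and h_r(x) = ∏_{j=1}^d Σ_{k=0}^r |2πx_j|^{2k}, there is a constant c = c(r,d,B) such that for all n ≥ 2 and all u ∈ [1,2^{1/d}]^d: Σ_{m ∈ ℤ^d \ {0}} h_r(n^{1/d} û B m)^{−1} ≤ c · n^{−2r} (log n)^{d−1}. -/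
/-!
Write `y = n^{1/d} û B m` and sort the lattice points `m ≠ 0` by the dyadic scales `β j` of the
coordinates of `y`, i.e. `max 1 |y j| ≤ 2 ^ β j ≤ 2 max 1 |y j|`. Since
`h_r(y) ≥ ∏ j, max 1 |y j| ^ (2r)`, every term of the shell `β` is at most
`(2 ^ d / 2 ^ |β|) ^ (2r)`. The shell lies in the box `|(B m) j| ≤ 2 ^ β j / (n^{1/d} u j)` of
volume at most `2 ^ d 2 ^ |β| / n`; the Frolov product bound `|∏ j, (B m) j| ≥ 1` forces
`2 ^ |β| ≥ n` for a nonempty shell, so the box count gives at most `2 ^ (d+1) 2 ^ |β| / n` points.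
At most `(s+1) ^ (d-1)` shells have `|β| = s`, and summing
`(s+1) ^ (d-1) 2 ^ s / (n 2 ^ (2rs))` over `s ≥ log₂ n` yields `n ^ (-2r) (log n) ^ (d-1)`.
-/

open Matrix Set
open scoped ENNReal

noncomputable section

/-- The weight function `h_r`. -/
def hrw {d : ℕ} (r : ℕ) (x : Fin d → ℝ) : ℝ :=
  ∏ j, ∑ k ∈ Finset.range (r + 1), |2 * Real.pi * x j| ^ (2 * k)

lemma pow_prod_max_one_abs_le_hrw {d : ℕ} (r : ℕ) (x : Fin d → ℝ) :
    (∏ j, max 1 |x j|) ^ (2 * r) ≤ hrw r x := by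
  rw [hrw, ← Finset.prod_pow]
  refine Finset.prod_le_prod (fun _ _ ↦ by positivity) fun j _ ↦ ?_
  have hterm : ∀ k ≤ r, |2 * Real.pi * x j| ^ (2 * k) ≤
      ∑ k ∈ Finset.range (r + 1), |2 * Real.pi * x j| ^ (2 * k) := fun k hk ↦
    Finset.single_le_sum (f := fun k ↦ |2 * Real.pi * x j| ^ (2 * k))
      (fun _ _ ↦ by positivity) (Finset.mem_range.2 (Nat.lt_succ_of_le hk))
  rcases le_total |x j| 1 with h | h
  · simpa [max_eq_left h] using hterm 0 (Nat.zero_le r)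
  · have h2pi : (1 : ℝ) ≤ |2 * Real.pi| := by
      rw [abs_of_pos Real.two_pi_pos]; linarith [Real.pi_gt_three]
    have hx : |x j| ≤ |2 * Real.pi * x j| := by
      rw [abs_mul]; exact le_mul_of_one_le_left (abs_nonneg _) h2pi
    rw [max_eq_right h]
    exact (pow_le_pow_left₀ (abs_nonneg _) hx _).trans (hterm r le_rfl)

/-- The least `k` with `max 1 |x| ≤ 2 ^ k`. -/
def dyadicIndex (x : ℝ) : ℕ := Nat.clog 2 ⌈max 1 |x|⌉₊

lemma intClog_max_one_abs_eq_dyadicIndex (x : ℝ) : Int.clog 2 (max 1 |x|) = dyadicIndex x :=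
  Int.clog_of_one_le_right 2 (le_max_left 1 |x|)

lemma max_one_abs_le_two_pow_dyadicIndex (x : ℝ) : max 1 |x| ≤ 2 ^ dyadicIndex x := by
  have h := Int.self_le_zpow_clog one_lt_two (max 1 |x|)
  rwa [intClog_max_one_abs_eq_dyadicIndex, zpow_natCast, Nat.cast_ofNat] at h

lemma two_pow_dyadicIndex_le (x : ℝ) : 2 ^ dyadicIndex x ≤ 2 * max 1 |x| := by
  have h := Int.zpow_pred_clog_lt_self one_lt_two (one_pos.trans_le (le_max_left 1 |x|))
  rw [intClog_max_one_abs_eq_dyadicIndex, zpow_sub_one₀ (by norm_num), zpow_natCast,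
    Nat.cast_ofNat] at h
  linarith

lemma prod_max_one_abs_le_two_pow_sum {d : ℕ} (x : Fin d → ℝ) :
    ∏ j, max 1 |x j| ≤ 2 ^ ∑ j, dyadicIndex (x j) := by
  rw [← Finset.prod_pow_eq_pow_sum]
  exact Finset.prod_le_prod (fun _ _ ↦ by positivity)
    fun j _ ↦ max_one_abs_le_two_pow_dyadicIndex (x j)

lemma two_pow_sum_le_prod_max_one_abs {d : ℕ} (x : Fin d → ℝ) :
    2 ^ ∑ j, dyadicIndex (x j) ≤ 2 ^ d * ∏ j, max 1 |x j| := by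
  calc 2 ^ ∑ j, dyadicIndex (x j) = ∏ j, (2 : ℝ) ^ dyadicIndex (x j) :=
        (Finset.prod_pow_eq_pow_sum _ _ _).symm
    _ ≤ ∏ j, 2 * max 1 |x j| :=
        Finset.prod_le_prod (fun _ _ ↦ by positivity) fun j _ ↦ two_pow_dyadicIndex_le (x j)
    _ = 2 ^ d * ∏ j, max 1 |x j| := by
        rw [Finset.prod_mul_distrib, Finset.prod_const, Finset.card_univ, Fintype.card_fin]

lemma inv_hrw_le {d : ℕ} (r : ℕ) (x : Fin d → ℝ) :
    (hrw r x)⁻¹ ≤ (2 ^ d / 2 ^ ∑ j, dyadicIndex (x j)) ^ (2 * r) := by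
  have hlow : ((2 ^ ∑ j, dyadicIndex (x j)) / 2 ^ d) ^ (2 * r) ≤ hrw r x := by
    refine le_trans (pow_le_pow_left₀ (by positivity) ?_ _) (pow_prod_max_one_abs_le_hrw r x)
    rw [div_le_iff₀' (by positivity)]
    exact two_pow_sum_le_prod_max_one_abs x
  rw [← inv_div, inv_pow]
  exact inv_anti₀ (by positivity) hlow

lemma card_antidiagonalTuple_le (d s : ℕ) :
    (Finset.Nat.antidiagonalTuple d s).card ≤ (s + 1) ^ (d - 1) := by
  cases d with
  | zero => exact (Finset.card_le_univ _).trans (by simp)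
  | succ k =>
    calc (Finset.Nat.antidiagonalTuple (k + 1) s).card
        ≤ (Fintype.piFinset fun _ : Fin k ↦ Finset.range (s + 1)).card := by
          refine Finset.card_le_card_of_injOn Fin.tail (fun β hβ ↦ ?_) fun β hβ γ hγ h ↦ ?_
          · simp only [Finset.mem_coe, Finset.Nat.mem_antidiagonalTuple] at hβ
            simp only [Finset.mem_coe, Fintype.mem_piFinset, Finset.mem_range, Fin.tail]
            intro j
            have := Finset.single_le_sum (fun i _ ↦ Nat.zero_le (β i)) (Finset.mem_univ j.succ)
            omega
          · simp only [Finset.mem_coe, Finset.Nat.mem_antidiagonalTuple, Fin.sum_univ_succ]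
              at hβ hγ
            have h0 : β 0 = γ 0 := by
              have := congrArg (fun f ↦ ∑ i, f i) h
              simp only [Fin.tail] at this
              omega
            rw [← Fin.cons_self_tail β, ← Fin.cons_self_tail γ, h0, h]
      _ = (s + 1) ^ (k + 1 - 1) := by simp

lemma tsum_comp_sum_le {d : ℕ} (g : ℕ → ℝ≥0∞) :
    ∑' β : Fin d → ℕ, g (∑ j, β j) ≤ ∑' s : ℕ, ((s + 1) ^ (d - 1) : ℕ) * g s := by
  rw [← (Finset.Nat.sigmaAntidiagonalTupleEquivTuple d).tsum_eq, ENNReal.tsum_sigma']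
  refine ENNReal.tsum_le_tsum fun s ↦ ?_
  calc ∑' β : Finset.Nat.antidiagonalTuple d s, g (∑ j, (β : Fin d → ℕ) j)
      = ∑' _ : Finset.Nat.antidiagonalTuple d s, g s := by
        refine tsum_congr fun β ↦ ?_
        rw [Finset.Nat.mem_antidiagonalTuple.1 β.2]
    _ = (Finset.Nat.antidiagonalTuple d s).card * g s := by
        rw [ENNReal.tsum_const, ENat.card_eq_coe_fintype_card, Fintype.card_coe]; rfl
    _ ≤ ((s + 1) ^ (d - 1) : ℕ) * g s := by
        gcongr; exact card_antidiagonalTuple_le d s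

lemma natClog_add_one_le_three_mul_logb {n : ℕ} (hn : 2 ≤ n) :
    (Nat.clog 2 n + 1 : ℝ) ≤ 3 * Real.logb 2 n := by
  have hceil : (Nat.clog 2 n : ℝ) < Real.logb 2 n + 1 := by
    have h := Real.ceil_logb_natCast (b := 2) (Nat.cast_nonneg n)
    rw [Int.clog_natCast, Nat.cast_ofNat] at h
    exact_mod_cast h ▸ Int.ceil_lt_add_one (Real.logb 2 n)
  have hone : 1 ≤ Real.logb 2 n := by
    rw [Real.le_logb_iff_rpow_le one_lt_two (by positivity), Real.rpow_one]
    exact_mod_cast hn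
  linarith

lemma two_pow_add_div_le {n r s : ℕ} (t : ℕ) (hr : 1 ≤ r) (hn0 : 0 < n) (hn : n ≤ 2 ^ s) :
    (2 : ℝ) ^ (s + t) / (n * (2 ^ (s + t)) ^ (2 * r)) ≤ (1 / 2) ^ t / n ^ (2 * r) := by
  obtain ⟨p, hp⟩ : ∃ p, 2 * r = p + 1 := ⟨2 * r - 1, by omega⟩
  have hn' : (0 : ℝ) < n := by exact_mod_cast hn0
  have hns : (n : ℝ) ≤ 2 ^ s := by exact_mod_cast hn
  rw [hp, pow_add]
  calc (2 : ℝ) ^ s * 2 ^ t / (n * (2 ^ s * 2 ^ t) ^ (p + 1))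
      = (((2 : ℝ) ^ s * 2 ^ t) ^ p * n)⁻¹ := by rw [pow_succ]; field_simp
    _ ≤ (((n : ℝ) * 2 ^ t) ^ p * n)⁻¹ := by gcongr
    _ ≤ ((n : ℝ) ^ p * 2 ^ t * n)⁻¹ := by
        rw [mul_pow]; gcongr; exact le_self_pow₀ (one_le_pow₀ one_le_two) (by omega)
    _ = (1 / 2) ^ t / n ^ (p + 1) := by rw [_root_.one_div_pow, div_div, one_div, pow_succ]; ring

lemma dyadic_shell_term_le {k r n : ℕ} (hr : 1 ≤ r) (hn : 2 ≤ n) (t : ℕ) :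
    ((Nat.clog 2 n + t : ℕ) + 1 : ℝ) ^ k * (if n ≤ 2 ^ (Nat.clog 2 n + t) then
        (2 : ℝ) ^ (Nat.clog 2 n + t) / (n * (2 ^ (Nat.clog 2 n + t)) ^ (2 * r)) else 0)
      ≤ (3 * Real.logb 2 n) ^ k / n ^ (2 * r) * ((t + 1) ^ k * (1 / 2) ^ t) := by
  have hn0 : 0 < n := by omega
  have hlogb : 0 ≤ Real.logb 2 n :=
    Real.logb_nonneg one_lt_two (by exact_mod_cast (by omega : 1 ≤ n))
  have hclog : n ≤ 2 ^ Nat.clog 2 n := Nat.le_pow_clog one_lt_two n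
  rw [if_pos (hclog.trans (Nat.pow_le_pow_right two_pos (Nat.le_add_right _ t)))]
  have hlog : ((Nat.clog 2 n + t : ℕ) + 1 : ℝ) ≤ 3 * Real.logb 2 n * (t + 1) := by
    have := natClog_add_one_le_three_mul_logb hn
    push_cast
    nlinarith [(t.cast_nonneg : (0 : ℝ) ≤ t)]
  calc _ ≤ (3 * Real.logb 2 n * (t + 1)) ^ k * ((1 / 2) ^ t / n ^ (2 * r)) :=
        mul_le_mul (pow_le_pow_left₀ (by positivity) hlog k)
          (two_pow_add_div_le t hr hn0 hclog) (by positivity) (by positivity)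
    _ = _ := by rw [mul_pow]; ring

lemma tsum_eq_tsum_add_of_forall_lt_eq_zero {M : Type*} [AddCommMonoid M] [TopologicalSpace M]
    {f : ℕ → M} {s₀ : ℕ} (hf : ∀ s < s₀, f s = 0) : ∑' s, f s = ∑' t, f (s₀ + t) := by
  refine ((add_right_injective s₀).tsum_eq fun s hs ↦ ⟨s - s₀, ?_⟩).symm
  have : s₀ ≤ s := not_lt.1 fun h ↦ hs (hf s h)
  simp only [Nat.add_sub_cancel' this]

lemma exists_tsum_dyadic_le (k r : ℕ) (hr : 1 ≤ r) : ∃ C > 0, ∀ n : ℕ, 2 ≤ n →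
    ∑' s : ℕ, ENNReal.ofReal ((s + 1) ^ k *
        if n ≤ 2 ^ s then (2 : ℝ) ^ s / (n * (2 ^ s) ^ (2 * r)) else 0)
      ≤ ENNReal.ofReal (C * (n : ℝ) ^ (-(2 : ℝ) * r) * Real.log n ^ k) := by
  have hK : Summable fun t : ℕ ↦ ((t : ℝ) + 1) ^ k * (1 / 2) ^ t := by
    have h := ((summable_pow_mul_geometric_of_norm_lt_one k (r := (1 / 2 : ℝ))
      (by norm_num)).comp_injective (add_left_injective 1)).mul_left 2
    refine h.congr fun t ↦ ?_
    simp only [Function.comp_apply, Nat.cast_add, Nat.cast_one, pow_succ]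
    ring
  set K := ∑' t : ℕ, ((t : ℝ) + 1) ^ k * (1 / 2) ^ t
  have hK0 : 0 < K := hK.tsum_pos (fun t ↦ by positivity) 0 (by norm_num)
  refine ⟨(3 / Real.log 2) ^ k * K, by have := Real.log_pos one_lt_two; positivity,
    fun n hn ↦ ?_⟩
  have hlogb : 0 ≤ Real.logb 2 n :=
    Real.logb_nonneg one_lt_two (by exact_mod_cast (by omega : 1 ≤ n))
  have hempty : ∀ s < Nat.clog 2 n, ¬ n ≤ 2 ^ s := fun s hs h ↦
    hs.not_ge ((Nat.clog_le_iff_le_pow one_lt_two).2 h)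
  calc _ = ∑' t : ℕ, ENNReal.ofReal (((Nat.clog 2 n + t : ℕ) + 1 : ℝ) ^ k *
        if n ≤ 2 ^ (Nat.clog 2 n + t) then
          (2 : ℝ) ^ (Nat.clog 2 n + t) / (n * (2 ^ (Nat.clog 2 n + t)) ^ (2 * r)) else 0) :=
        tsum_eq_tsum_add_of_forall_lt_eq_zero fun s hs ↦ by simp [hempty s hs]
    _ ≤ ∑' t : ℕ, ENNReal.ofReal ((3 * Real.logb 2 n) ^ k / n ^ (2 * r) *
          (((t : ℝ) + 1) ^ k * (1 / 2) ^ t)) :=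
        ENNReal.tsum_le_tsum fun t ↦ ENNReal.ofReal_le_ofReal (dyadic_shell_term_le hr hn t)
    _ = ENNReal.ofReal ((3 * Real.logb 2 n) ^ k / n ^ (2 * r) * K) := by
        rw [← ENNReal.ofReal_tsum_of_nonneg (fun t ↦ by positivity) (hK.mul_left _),
          tsum_mul_left]
    _ = _ := by
        congr 1
        rw [Real.logb, neg_mul, Real.rpow_neg (Nat.cast_nonneg n),
          show (2 : ℝ) * r = (2 * r : ℕ) by push_cast; ring, Real.rpow_natCast, mul_pow, div_pow]
        ring

section Frolov

variable {d : ℕ}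

def FrolovProdBound (B : Matrix (Fin d) (Fin d) ℝ) : Prop :=
  ∀ m : Fin d → ℤ, m ≠ 0 → 1 ≤ |∏ j, (B *ᵥ fun k => (m k : ℝ)) j|

def FrolovBoxCount (B : Matrix (Fin d) (Fin d) ℝ) : Prop :=
  ∀ x y : Fin d → ℝ,
    {m : Fin d → ℤ | ∀ j, (B *ᵥ fun k => (m k : ℝ)) j ∈ Set.uIcc (x j) (y j)}.encard
      ≤ ENNReal.ofReal (∏ j, |x j - y j|) + 1

def scaledLatticePoint (B : Matrix (Fin d) (Fin d) ℝ) (a : Fin d → ℝ) (m : Fin d → ℤ) :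
    Fin d → ℝ :=
  fun j ↦ a j * (B *ᵥ fun k => (m k : ℝ)) j

variable {B : Matrix (Fin d) (Fin d) ℝ} {a : Fin d → ℝ}

lemma FrolovBoxCount.encard_centeredBox_le (hB : FrolovBoxCount B) {b : Fin d → ℝ}
    (hb : ∀ j, 0 ≤ b j) :
    {m : Fin d → ℤ | ∀ j, |(B *ᵥ fun k => (m k : ℝ)) j| ≤ b j}.encard
      ≤ ENNReal.ofReal (∏ j, 2 * b j) + 1 := by
  convert hB (-b) b using 3 with m
  · simp only [Set.uIcc_of_le (neg_le_self (hb _)), Set.mem_Icc, abs_le,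
      Pi.neg_apply]
  · congr 2 with j
    rw [Pi.neg_apply, ← neg_add', abs_neg, abs_of_nonneg (by linarith [hb j])]
    ring

lemma FrolovProdBound.prod_le_prod_max_one_abs (hB : FrolovProdBound B) (ha : ∀ j, 0 < a j)
    {m : Fin d → ℤ} (hm : m ≠ 0) : ∏ j, a j ≤ ∏ j, max 1 |scaledLatticePoint B a m j| :=
  calc ∏ j, a j ≤ (∏ j, a j) * |∏ j, (B *ᵥ fun k => (m k : ℝ)) j| :=
        le_mul_of_one_le_right (Finset.prod_nonneg fun j _ ↦ (ha j).le) (hB m hm)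
    _ = ∏ j, |scaledLatticePoint B a m j| := by
        simp only [scaledLatticePoint, Finset.abs_prod, abs_mul, Finset.prod_mul_distrib,
          abs_of_pos (ha _)]
    _ ≤ ∏ j, max 1 |scaledLatticePoint B a m j| :=
        Finset.prod_le_prod (fun _ _ ↦ abs_nonneg _) fun _ _ ↦ le_max_right _ _

lemma FrolovBoxCount.encard_dyadicBox_le (hB : FrolovBoxCount B) (ha : ∀ j, 0 < a j) {n : ℕ}
    (hn0 : 0 < n) (hn : (n : ℝ) ≤ ∏ j, a j) {β : Fin d → ℕ} (hβ : (n : ℝ) ≤ 2 ^ ∑ j, β j) :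
    {m : Fin d → ℤ | ∀ j, |(B *ᵥ fun k => (m k : ℝ)) j| ≤ 2 ^ β j / a j}.encard
      ≤ ENNReal.ofReal (2 ^ (d + 1) * 2 ^ (∑ j, β j) / n) := by
  have hvol : ∏ j, 2 * (2 ^ β j / a j) ≤ 2 ^ d * 2 ^ (∑ j, β j) / n := by
    rw [Finset.prod_mul_distrib, Finset.prod_const, Finset.card_univ, Fintype.card_fin,
      Finset.prod_div_distrib, Finset.prod_pow_eq_pow_sum, mul_div_assoc]
    gcongr
  have hone : (1 : ℝ) ≤ 2 ^ d * 2 ^ (∑ j, β j) / n := by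
    rw [le_div_iff₀ (Nat.cast_pos.2 hn0), one_mul]
    exact hβ.trans (le_mul_of_one_le_left (by positivity) (one_le_pow₀ one_le_two))
  calc _ ≤ ENNReal.ofReal (∏ j, 2 * (2 ^ β j / a j)) + 1 :=
        hB.encard_centeredBox_le fun j ↦ by have := ha j; positivity
    _ ≤ ENNReal.ofReal (2 ^ d * 2 ^ (∑ j, β j) / n + 2 ^ d * 2 ^ (∑ j, β j) / n) := by
        rw [ENNReal.ofReal_add (by positivity) (by positivity)]
        gcongr
        exact ENNReal.one_le_ofReal.2 hone
    _ = ENNReal.ofReal (2 ^ (d + 1) * 2 ^ (∑ j, β j) / n) := by ring_nf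

lemma tsum_dyadicFiber_inv_hrw_le (hP : FrolovProdBound B) (hB : FrolovBoxCount B) (r : ℕ)
    (ha : ∀ j, 0 < a j) {n : ℕ} (hn0 : 0 < n) (hn : (n : ℝ) ≤ ∏ j, a j) (β : Fin d → ℕ) :
    ∑' m : {m : {m : Fin d → ℤ // m ≠ 0} //
          (fun j ↦ dyadicIndex (scaledLatticePoint B a m j)) = β},
        ENNReal.ofReal (hrw r (scaledLatticePoint B a m))⁻¹
      ≤ ENNReal.ofReal (2 ^ (d + 1) * (2 ^ d) ^ (2 * r) *
          if n ≤ 2 ^ (∑ j, β j) then (2 : ℝ) ^ (∑ j, β j) / (n * (2 ^ (∑ j, β j)) ^ (2 * r))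
          else 0) := by
  have hsum : ∀ m : {m : {m : Fin d → ℤ // m ≠ 0} //
      (fun j ↦ dyadicIndex (scaledLatticePoint B a m j)) = β},
      ∑ j, dyadicIndex (scaledLatticePoint B a m j) = ∑ j, β j :=
    fun m ↦ congrArg (∑ j, · j) m.2
  by_cases hs : n ≤ 2 ^ (∑ j, β j)
  · have hbox : ∀ m : {m : {m : Fin d → ℤ // m ≠ 0} //
        (fun j ↦ dyadicIndex (scaledLatticePoint B a m j)) = β},
        ∀ j, |(B *ᵥ fun k => (m.1.1 k : ℝ)) j| ≤ 2 ^ β j / a j := fun m j ↦ by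
      rw [le_div_iff₀' (ha j), ← abs_of_pos (ha j), ← abs_mul, ← congrFun m.2 j]
      exact (le_max_right _ _).trans (max_one_abs_le_two_pow_dyadicIndex _)
    calc _ ≤ ∑' _ : {m : {m : Fin d → ℤ // m ≠ 0} //
              (fun j ↦ dyadicIndex (scaledLatticePoint B a m j)) = β},
            ENNReal.ofReal ((2 ^ d / 2 ^ (∑ j, β j)) ^ (2 * r)) :=
          ENNReal.tsum_le_tsum fun m ↦ ENNReal.ofReal_le_ofReal (hsum m ▸ inv_hrw_le r _)
      _ ≤ ∑' _ : {m : Fin d → ℤ | ∀ j, |(B *ᵥ fun k => (m k : ℝ)) j| ≤ 2 ^ β j / a j},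
            ENNReal.ofReal ((2 ^ d / 2 ^ (∑ j, β j)) ^ (2 * r)) :=
          ENNReal.tsum_comp_le_tsum_of_injective
            (f := fun m ↦ ⟨m.1.1, hbox m⟩) (fun m m' h ↦ by simpa [Subtype.ext_iff] using h) _
      _ = _ * ENNReal.ofReal ((2 ^ d / 2 ^ (∑ j, β j)) ^ (2 * r)) := ENNReal.tsum_set_const _ _
      _ ≤ ENNReal.ofReal (2 ^ (d + 1) * 2 ^ (∑ j, β j) / n) *
            ENNReal.ofReal ((2 ^ d / 2 ^ (∑ j, β j)) ^ (2 * r)) := by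
          gcongr
          exact hB.encard_dyadicBox_le ha hn0 hn (by exact_mod_cast hs)
      _ = _ := by
          rw [← ENNReal.ofReal_mul (by positivity), if_pos hs, div_pow]
          field_simp
  · refine (ENNReal.tsum_eq_zero.2 fun m ↦ absurd ?_ hs).trans_le zero_le
    have := (hn.trans (hP.prod_le_prod_max_one_abs ha m.1.2)).trans
      (prod_max_one_abs_le_two_pow_sum (scaledLatticePoint B a m))
    rw [hsum m] at this
    exact_mod_cast this

lemma tsum_inv_hrw_le (hP : FrolovProdBound B) (hB : FrolovBoxCount B) (r : ℕ)
    (ha : ∀ j, 0 < a j) {n : ℕ} (hn0 : 0 < n) (hn : (n : ℝ) ≤ ∏ j, a j) :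
    ∑' m : {m : Fin d → ℤ // m ≠ 0}, ENNReal.ofReal (hrw r (scaledLatticePoint B a m))⁻¹
      ≤ ENNReal.ofReal (2 ^ (d + 1) * (2 ^ d) ^ (2 * r)) *
          ∑' s : ℕ, ENNReal.ofReal ((s + 1) ^ (d - 1) *
            if n ≤ 2 ^ s then (2 : ℝ) ^ s / (n * (2 ^ s) ^ (2 * r)) else 0) := by
  rw [← ENNReal.tsum_fiberwise _ fun m : {m : Fin d → ℤ // m ≠ 0} ↦
    fun j ↦ dyadicIndex (scaledLatticePoint B a m j)]
  calc _ ≤ ∑' β : Fin d → ℕ, ENNReal.ofReal (2 ^ (d + 1) * (2 ^ d) ^ (2 * r) *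
          if n ≤ 2 ^ (∑ j, β j) then
            (2 : ℝ) ^ (∑ j, β j) / (n * (2 ^ (∑ j, β j)) ^ (2 * r)) else 0) :=
        ENNReal.tsum_le_tsum (tsum_dyadicFiber_inv_hrw_le hP hB r ha hn0 hn)
    _ ≤ _ := tsum_comp_sum_le fun s ↦ ENNReal.ofReal (2 ^ (d + 1) * (2 ^ d) ^ (2 * r) *
          if n ≤ 2 ^ s then (2 : ℝ) ^ s / (n * (2 ^ s) ^ (2 * r)) else 0)
    _ = _ := by
        rw [← ENNReal.tsum_mul_left]
        refine tsum_congr fun s ↦ ?_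
        rw [← ENNReal.ofReal_natCast, ← ENNReal.ofReal_mul (by positivity),
          ← ENNReal.ofReal_mul (by positivity)]
        congr 1
        push_cast
        ring

end Frolov

lemma le_prod_rpow_one_div_mul {d : ℕ} (hd : 0 < d) {x : ℝ} (hx : 0 ≤ x) {u : Fin d → ℝ}
    (hu : ∀ j, 1 ≤ u j) : x ≤ ∏ j, x ^ ((1 : ℝ) / d) * u j := by
  rw [Finset.prod_mul_distrib, Finset.prod_const, Finset.card_univ, Fintype.card_fin,
    ← Real.rpow_natCast, ← Real.rpow_mul hx, one_div_mul_cancel (by positivity), Real.rpow_one]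
  exact le_mul_of_one_le_right hx (Finset.one_le_prod fun j _ ↦ hu j)

theorem stmt5_general {d : ℕ} (r : ℕ) (hr1 : 1 ≤ r) (hd : 0 < d)
    (B : Matrix (Fin d) (Fin d) ℝ)
    (hb : ∀ m : Fin d → ℤ, m ≠ 0 → 1 ≤ |∏ j, (B *ᵥ fun k => (m k : ℝ)) j|)
    (hbox : ∀ x y : Fin d → ℝ,
      {m : Fin d → ℤ | ∀ j, (B *ᵥ fun k => (m k : ℝ)) j ∈ Set.uIcc (x j) (y j)}.encard
        ≤ ENNReal.ofReal (∏ j, |x j - y j|) + 1) :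
    ∃ c > (0 : ℝ), ∀ n : ℕ, 2 ≤ n →
      ∀ u ∈ Set.Icc (1 : Fin d → ℝ) (fun _ => (2 : ℝ) ^ ((1 : ℝ) / d)),
        (∑' m : {m : Fin d → ℤ // m ≠ 0},
            ENNReal.ofReal
              ((hrw r (fun j => (n : ℝ) ^ ((1 : ℝ) / d) * u j *
                  (B *ᵥ fun k => (m.1 k : ℝ)) j))⁻¹))
          ≤ ENNReal.ofReal (c * (n : ℝ) ^ (-(2 : ℝ) * r) * Real.log n ^ (d - 1)) := by
  obtain ⟨C, hC, hsum⟩ := exists_tsum_dyadic_le (d - 1) r hr1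
  refine ⟨2 ^ (d + 1) * (2 ^ d) ^ (2 * r) * C, by positivity, fun n hn u hu ↦ ?_⟩
  have ha : ∀ j, 0 < (n : ℝ) ^ ((1 : ℝ) / d) * u j := fun j ↦
    mul_pos (Real.rpow_pos_of_pos (by positivity) _) (one_pos.trans_le (hu.1 j))
  calc _ ≤ _ := tsum_inv_hrw_le hb hbox r ha (by omega)
        (le_prod_rpow_one_div_mul hd (Nat.cast_nonneg n) hu.1)
    _ ≤ ENNReal.ofReal (2 ^ (d + 1) * (2 ^ d) ^ (2 * r)) *
          ENNReal.ofReal (C * (n : ℝ) ^ (-(2 : ℝ) * r) * Real.log n ^ (d - 1)) := by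
        gcongr
        exact hsum n hn
    _ = _ := by
        rw [← ENNReal.ofReal_mul (by positivity)]
        ring_nf

/-- For a Frolov matrix `B`: `Σ_{m≠0} h_r(n^{1/d} û B m)^{−1} ≤ c n^{−2r} (log n)^{d−1}`. -/
theorem stmt5 {d : ℕ} (r : ℕ) (hr1 : 1 ≤ r) (hd : 0 < d)
    (B : Matrix (Fin d) (Fin d) ℝ) (hdet : B.det ≠ 0)
    (hb : ∀ m : Fin d → ℤ, m ≠ 0 → 1 ≤ |∏ j, (B *ᵥ fun k => (m k : ℝ)) j|)
    (hbox : ∀ x y : Fin d → ℝ,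
      {m : Fin d → ℤ | ∀ j, (B *ᵥ fun k => (m k : ℝ)) j ∈ Set.uIcc (x j) (y j)}.encard
        ≤ ENNReal.ofReal (∏ j, |x j - y j|) + 1) :
    ∃ c > (0 : ℝ), ∀ n : ℕ, 2 ≤ n →
      ∀ u ∈ Set.Icc (1 : Fin d → ℝ) (fun _ => (2 : ℝ) ^ ((1 : ℝ) / d)),
        (∑' m : {m : Fin d → ℤ // m ≠ 0},
            ENNReal.ofReal
              ((hrw r (fun j => (n : ℝ) ^ ((1 : ℝ) / d) * u j *
                  (B *ᵥ fun k => (m.1 k : ℝ)) j))⁻¹))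
          ≤ ENNReal.ofReal (c * (n : ℝ) ^ (-(2 : ℝ) * r) * Real.log n ^ (d - 1)) :=
  stmt5_general r hr1 hd B hb hbox
end
end

section
/- For x ∈ ℝ^d with ∏_{j=1}^d |x_j| ≥ n ≥ 1, and any invertible matrix B with the Frolov properties, the set {m ∈ ℤ^d \ {0} : Bm ∈ [x/(2n)^{1/d}, x/n^{1/d}]} contains at most 2n^{−1}∏_j |x_j| points; if ∏_j|x_j| < n the set is empty. -/
open Matrix Set

/-- For `∏|x_j| ≥ n ≥ 1`, the set `{m ≠ 0 : Bm ∈ [x/(2n)^{1/d}, x/n^{1/d}]}` has at most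
`2 n^{−1} ∏|x_j|` points; if `∏|x_j| < n` it is empty. -/
theorem stmt11 {d : ℕ} (B : Matrix (Fin d) (Fin d) ℝ) (hdet : B.det ≠ 0)
    (hb : ∀ m : Fin d → ℤ, m ≠ 0 → 1 ≤ |∏ j, (B *ᵥ fun k => (m k : ℝ)) j|)
    (hbox : ∀ x y : Fin d → ℝ,
      {m : Fin d → ℤ | ∀ j, (B *ᵥ fun k => (m k : ℝ)) j ∈ Set.uIcc (x j) (y j)}.encard
        ≤ ENNReal.ofReal (∏ j, |x j - y j|) + 1)
    (n : ℝ) (hn : 1 ≤ n) (x : Fin d → ℝ) :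
    ((n ≤ ∏ j, |x j|) →
      {m : Fin d → ℤ | m ≠ 0 ∧ ∀ j, (B *ᵥ fun k => (m k : ℝ)) j ∈
          Set.uIcc (x j / (2 * n) ^ ((1 : ℝ) / d)) (x j / n ^ ((1 : ℝ) / d))}.encard
        ≤ ENNReal.ofReal (2 * n⁻¹ * ∏ j, |x j|)) ∧
    ((∏ j, |x j|) < n →
      {m : Fin d → ℤ | m ≠ 0 ∧ ∀ j, (B *ᵥ fun k => (m k : ℝ)) j ∈
          Set.uIcc (x j / (2 * n) ^ ((1 : ℝ) / d)) (x j / n ^ ((1 : ℝ) / d))} = ∅) := by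
  rcases Nat.eq_zero_or_pos d with hd | hd
  · subst hd
    have key : ∀ (p : (Fin 0 → ℤ) → Prop), {m : Fin 0 → ℤ | m ≠ 0 ∧ p m} = ∅ :=
      fun p => Set.eq_empty_iff_forall_notMem.mpr fun m hm =>
        hm.1 (funext fun j => j.elim0)
    exact ⟨fun _ => by rw [key]; simp, fun _ => key _⟩
  · have hn0 : (0:ℝ) < n := zero_lt_one.trans_le hn
    set a := (2*n) ^ ((1:ℝ)/d) with hadef
    set b := n ^ ((1:ℝ)/d) with hbdef
    have ha0 : 0 < a := Real.rpow_pos_of_pos (by linarith) _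
    have hb0 : 0 < b := Real.rpow_pos_of_pos hn0 _
    have hba : b ≤ a := Real.rpow_le_rpow hn0.le (by linarith) (by positivity)
    have hdne : (d:ℝ) ≠ 0 := Nat.cast_ne_zero.mpr hd.ne'
    have hbd : b ^ (d:ℕ) = n := by
      rw [hbdef, ← Real.rpow_natCast (n ^ ((1:ℝ)/d)) d, ← Real.rpow_mul hn0.le,
        one_div, inv_mul_cancel₀ hdne, Real.rpow_one]
    have hinv : 1/a ≤ 1/b := one_div_le_one_div_of_le hb0 hba
    have key : ∀ (z u : ℝ), z ∈ Set.uIcc (u/a) (u/b) → |z| ≤ |u| / b := by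
      intro z u hz
      have hua : |u / a| ≤ |u| / b := by
        rw [abs_div, abs_of_pos ha0]
        gcongr
      have hub : |u / b| = |u| / b := by rw [abs_div, abs_of_pos hb0]
      obtain ⟨p1, p2⟩ := abs_le.mp hua
      have p3 : u/b ≤ |u|/b := hub ▸ le_abs_self _
      have p4 : -(|u|/b) ≤ u/b := hub ▸ neg_abs_le _
      rw [Set.mem_uIcc] at hz
      rw [abs_le]
      rcases hz with ⟨h1, h2⟩ | ⟨h1, h2⟩ <;> constructor <;> linarith
    have hprodb : ∏ j : Fin d, (|x j| / b) = (∏ j, |x j|) / n := by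
      rw [Finset.prod_div_distrib, Finset.prod_const, Finset.card_univ,
        Fintype.card_fin, hbd]
    constructor
    · intro hP
      have hPn : 1 ≤ (∏ j, |x j|) / n := (one_le_div hn0).mpr hP
      have hfac : ∀ u : ℝ, |u / a - u / b| ≤ |u| / b := by
        intro u
        have h : u/a - u/b = u * (1/a - 1/b) := by ring
        rw [h, abs_mul]
        have h1 : |1/a - 1/b| ≤ 1/b := by
          rw [abs_sub_comm, abs_of_nonneg (by linarith)]
          have : 0 < 1/a := by positivity
          linarith
        calc |u| * |1/a - 1/b| ≤ |u| * (1/b) := by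
              exact mul_le_mul_of_nonneg_left h1 (abs_nonneg u)
          _ = |u| / b := by ring
      have hV : ∏ j : Fin d, |x j / a - x j / b| ≤ (∏ j, |x j|) / n := by
        rw [← hprodb]
        exact Finset.prod_le_prod (fun j _ => abs_nonneg _) (fun j _ => hfac (x j))
      have hmono : {m : Fin d → ℤ | m ≠ 0 ∧ ∀ j, (B *ᵥ fun k => (m k : ℝ)) j ∈
              Set.uIcc (x j / a) (x j / b)}.encard
          ≤ {m : Fin d → ℤ | ∀ j, (B *ᵥ fun k => (m k : ℝ)) j ∈
              Set.uIcc (x j / a) (x j / b)}.encard :=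
            Set.encard_mono (fun m hm => hm.2)
      calc ({m : Fin d → ℤ | m ≠ 0 ∧ ∀ j, (B *ᵥ fun k => (m k : ℝ)) j ∈
              Set.uIcc (x j / a) (x j / b)}.encard : ENNReal)
          ≤ ({m : Fin d → ℤ | ∀ j, (B *ᵥ fun k => (m k : ℝ)) j ∈
              Set.uIcc (x j / a) (x j / b)}.encard : ENNReal) := by
            exact_mod_cast hmono
        _ ≤ ENNReal.ofReal (∏ j, |x j / a - x j / b|) + 1 := hbox _ _
        _ ≤ ENNReal.ofReal ((∏ j, |x j|) / n) + ENNReal.ofReal ((∏ j, |x j|) / n) :=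
            add_le_add (ENNReal.ofReal_le_ofReal hV) (ENNReal.one_le_ofReal.mpr hPn)
        _ = ENNReal.ofReal (2 * n⁻¹ * ∏ j, |x j|) := by
            rw [← ENNReal.ofReal_add (by positivity) (by positivity)]
            congr 1
            ring
    · intro hP
      rw [Set.eq_empty_iff_forall_notMem]
      rintro m ⟨hm0, hm⟩
      have h2 : |∏ j, (B *ᵥ fun k => (m k:ℝ)) j| ≤ ∏ j : Fin d, (|x j| / b) := by
        rw [Finset.abs_prod]
        exact Finset.prod_le_prod (fun j _ => abs_nonneg _)
          (fun j _ => key _ _ (hm j))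
      rw [hprodb] at h2
      have h3 : (∏ j, |x j|) / n < 1 := (div_lt_one hn0).mpr hP
      linarith [hb m hm0]
end

section
/- For r, d ∈ ℕ with r ≥ 1 there is c > 0 such that for all n ≥ 2: ∫_{D_n} h_r(x)^{−1} dx ≤ c · n^{1−2r} (log n)^{d−1}, where D_n = {x ∈ ℝ^d : ∏_{j=1}^d |x_j| ≥ n} and h_r(x) = ∏_{j=1}^d Σ_{k=0}^r |2πx_j|^{2k}. -/
/-!
Enlarging `|x_j|` to `1 + |x_j|` only enlarges the region and makes the weight harmless near
the coordinate hyperplanes: `h_r(x)⁻¹ ≤ 4^{rd} ∏ (1 + |x_j|)^{-2r}`. For `p > 1` the tail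
`T_d(t) = ∫_{∏ (1 + |x_j|) ≥ t} ∏ (1 + |x_j|)^{-p} dx` obeys, by Fubini in the first
coordinate, `T_{d+1}(t) = 2 ∫_1^∞ v^{-p} T_d(t / v) dv`. Beyond `v = t` the inner tail is the
full integral, giving `≲ t^{1-p}`; below it the bound `T_d(τ) ≲ τ^{1-p} (1 + log τ)^{d-1}`
makes the integrand `≲ t^{1-p} (1 + log t)^{d-1} / v`, and `∫_1^t dv / v = log t` yields the
extra logarithm.
-/

open MeasureTheory Set

noncomputable section

open scoped ENNReal

namespace HyperbolicCross

open Real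

theorem lintegral_comp_one_add_abs {F : ℝ → ℝ≥0∞} (hF : Measurable F) :
    ∫⁻ s, F (1 + |s|) = 2 * ∫⁻ v in Ioi 1, F v := by
  have hG : Measurable fun s : ℝ => F (1 + |s|) := hF.comp (measurable_const.add measurable_abs)
  have hpos : ∫⁻ s in Ioi 0, F (1 + |s|) = ∫⁻ v in Ioi 1, F v := by
    rw [setLIntegral_congr_fun measurableSet_Ioi fun s hs => by rw [abs_of_pos hs]]
    simpa using (measurePreserving_add_left volume (1 : ℝ)).setLIntegral_comp_preimage
      (measurableSet_Ioi (a := 1)) hF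
  have hneg : ∫⁻ s in Iic 0, F (1 + |s|) = ∫⁻ s in Ioi 0, F (1 + |s|) := by
    rw [Measure.restrict_congr_set Iio_ae_eq_Iic.symm]
    simpa using (Measure.measurePreserving_neg (volume : Measure ℝ)).setLIntegral_comp_preimage
      (measurableSet_Ioi (a := 0)) hG
  rw [← lintegral_add_compl _ measurableSet_Ioi, compl_Ioi, hneg, hpos, two_mul]

theorem lintegral_Ici_rpow_neg {p t : ℝ} (hp : 1 < p) (ht : 0 < t) :
    ∫⁻ v in Ici t, ENNReal.ofReal (v ^ (-p)) = ENNReal.ofReal (t ^ (1 - p) / (p - 1)) := by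
  have hp' : -p < -1 := by linarith
  rw [Measure.restrict_congr_set Ioi_ae_eq_Ici.symm,
    ← ofReal_integral_eq_lintegral_ofReal (integrableOn_Ioi_rpow_of_lt hp' ht)
      ((ae_restrict_iff' measurableSet_Ioi).2 (ae_of_all _ fun v hv =>
        Real.rpow_nonneg (ht.trans hv).le _)),
    integral_Ioi_rpow_of_lt hp' ht, show -p + 1 = 1 - p by ring, neg_div, ← div_neg, neg_sub]

theorem lintegral_Ioo_one_inv {t : ℝ} (ht : 1 ≤ t) :
    ∫⁻ v in Ioo 1 t, ENNReal.ofReal v⁻¹ = ENNReal.ofReal (log t) := by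
  have hint : IntegrableOn (fun v : ℝ => v⁻¹) (Ioc 1 t) :=
    (continuousOn_inv₀.mono fun v (hv : v ∈ Icc 1 t) =>
      (zero_lt_one.trans_le hv.1).ne').integrableOn_Icc.mono_set Ioc_subset_Icc_self
  rw [Measure.restrict_congr_set Ioo_ae_eq_Ioc,
    ← ofReal_integral_eq_lintegral_ofReal hint ((ae_restrict_iff' measurableSet_Ioc).2
      (ae_of_all _ fun v hv => inv_nonneg.2 (zero_le_one.trans hv.1.le))),
    ← intervalIntegral.integral_of_le ht, integral_inv_of_pos zero_lt_one (by linarith), div_one]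

def tailIntegrand (p : ℝ) (d : ℕ) (t : ℝ) : (Fin d → ℝ) → ℝ≥0∞ :=
  {x | t ≤ ∏ j, (1 + |x j|)}.indicator fun x => ∏ j, ENNReal.ofReal ((1 + |x j|) ^ (-p))

def tailIntegral (p : ℝ) (d : ℕ) (t : ℝ) : ℝ≥0∞ :=
  ∫⁻ x, tailIntegrand p d t x

variable {p : ℝ}

theorem measurableSet_le_prod_one_add_abs (d : ℕ) (t : ℝ) :
    MeasurableSet {x : Fin d → ℝ | t ≤ ∏ j, (1 + |x j|)} :=
  measurableSet_le measurable_const (by fun_prop)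

theorem measurable_tailIntegrand (d : ℕ) (t : ℝ) : Measurable (tailIntegrand p d t) :=
  Measurable.indicator (by fun_prop) (measurableSet_le_prod_one_add_abs d t)

theorem tailIntegrand_insertNth (d : ℕ) (t s : ℝ) (y : Fin d → ℝ) :
    tailIntegrand p (d + 1) t (Fin.insertNth 0 s y) =
      ENNReal.ofReal ((1 + |s|) ^ (-p)) * tailIntegrand p d (t / (1 + |s|)) y := by
  simp only [tailIntegrand, indicator_apply, mem_ofPred_eq, Fin.insertNth_zero',
    Fin.prod_univ_succ, Fin.cons_zero, Fin.cons_succ, div_le_iff₀ (by positivity : 0 < 1 + |s|),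
    mul_ite, mul_zero, mul_comm _ (1 + |s|)]

theorem tailIntegral_antitone (d : ℕ) : Antitone (tailIntegral p d) := fun _ _ hst =>
  lintegral_mono fun _ => indicator_le_indicator_of_subset (fun _ hx => hst.trans hx)
    (fun _ => zero_le) _

theorem tailIntegral_of_le_one {d : ℕ} {t : ℝ} (ht : t ≤ 1) :
    tailIntegral p d t = tailIntegral p d 1 := by
  have h : ∀ τ ≤ (1 : ℝ), {x : Fin d → ℝ | τ ≤ ∏ j, (1 + |x j|)} = univ :=
    fun τ hτ =>
    eq_univ_of_forall fun x => hτ.trans <| Finset.one_le_prod fun _ _ =>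
      le_add_of_nonneg_right (abs_nonneg _)
  rw [tailIntegral, tailIntegral, tailIntegrand, tailIntegrand, h t ht, h 1 le_rfl]

theorem tailIntegral_zero (t : ℝ) : tailIntegral p 0 t = if t ≤ 1 then 1 else 0 := by
  have hvol : (volume : Measure (Fin 0 → ℝ)) univ = 1 := by
    rw [volume_pi, Measure.pi_univ]; simp
  split_ifs with ht <;> simp [tailIntegral, tailIntegrand, ht, hvol]

theorem tailIntegral_succ_eq_lintegral (d : ℕ) (t : ℝ) :
    tailIntegral p (d + 1) t =
      ∫⁻ s, ENNReal.ofReal ((1 + |s|) ^ (-p)) * tailIntegral p d (t / (1 + |s|)) := by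
  have hf := measurable_tailIntegrand (p := p) (d + 1) t
  rw [tailIntegral, volume_pi,
    ← (measurePreserving_piFinSuccAbove (fun _ => (volume : Measure ℝ)) 0).symm.lintegral_comp
      hf,
    lintegral_prod (fun z => tailIntegrand p (d + 1) t
      ((MeasurableEquiv.piFinSuccAbove (fun _ => ℝ) 0).symm z))
      (hf.comp (MeasurableEquiv.measurable _)).aemeasurable]
  refine lintegral_congr fun s => ?_
  change ∫⁻ y, tailIntegrand p (d + 1) t (Fin.insertNth 0 s y) ∂(Measure.pi fun _ => volume) =
    _
  simp only [tailIntegrand_insertNth]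
  rw [lintegral_const_mul _ (measurable_tailIntegrand _ _), tailIntegral, volume_pi]

theorem tailIntegral_succ (d : ℕ) (t : ℝ) :
    tailIntegral p (d + 1) t =
      2 * ∫⁻ v in Ioi 1, ENNReal.ofReal (v ^ (-p)) * tailIntegral p d (t / v) := by
  rw [tailIntegral_succ_eq_lintegral]
  exact lintegral_comp_one_add_abs
    (F := fun v => ENNReal.ofReal (v ^ (-p)) * tailIntegral p d (t / v))
    ((ENNReal.measurable_ofReal.comp (measurable_id.pow_const _)).mul
      ((tailIntegral_antitone d).measurable.comp (measurable_const.div measurable_id)))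

theorem tailIntegral_one_le (hp : 1 < p) {t : ℝ} (ht : 1 ≤ t) :
    tailIntegral p 1 t ≤ ENNReal.ofReal (2 / (p - 1) * t ^ (1 - p)) := by
  have hpoint : ∀ v ∈ Ioi (1 : ℝ), ENNReal.ofReal (v ^ (-p)) * tailIntegral p 0 (t / v) ≤
      (Ici t).indicator (fun v => ENNReal.ofReal (v ^ (-p))) v := by
    intro v hv
    rw [tailIntegral_zero]
    split_ifs with htv
    · rw [indicator_of_mem (mem_Ici.2 ((div_le_one₀ (zero_lt_one.trans hv)).1 htv)), mul_one]
    · rw [mul_zero]; exact zero_le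
  calc tailIntegral p 1 t
      ≤ 2 * ∫⁻ v in Ioi 1, (Ici t).indicator (fun v => ENNReal.ofReal (v ^ (-p))) v := by
        rw [tailIntegral_succ]; gcongr 1; exact setLIntegral_mono' measurableSet_Ioi hpoint
    _ ≤ 2 * ∫⁻ v in Ici t, ENNReal.ofReal (v ^ (-p)) := by
        rw [← lintegral_indicator measurableSet_Ici]
        gcongr 1
        exact setLIntegral_le_lintegral _ _
    _ = ENNReal.ofReal (2 / (p - 1) * t ^ (1 - p)) := by
        rw [lintegral_Ici_rpow_neg hp (by linarith), ← ENNReal.ofReal_ofNat 2,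
          ← ENNReal.ofReal_mul zero_le_two]
        ring_nf

theorem rpow_neg_mul_div_rpow_one_sub {v t : ℝ} (hv : 0 < v) (ht : 0 ≤ t) :
    v ^ (-p) * (t / v) ^ (1 - p) = v⁻¹ * t ^ (1 - p) := by
  rw [Real.div_rpow ht hv.le, mul_div_assoc', mul_comm, mul_div_assoc, ← Real.rpow_sub hv,
    show -p - (1 - p) = -1 by ring, Real.rpow_neg_one, mul_comm]

theorem setLIntegral_Ici_mul_tailIntegral_le (hp : 1 < p) {d : ℕ} {C t : ℝ}
    (hC : tailIntegral p d 1 ≤ ENNReal.ofReal C) (ht : 0 < t) :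
    ∫⁻ v in Ici t, ENNReal.ofReal (v ^ (-p)) * tailIntegral p d (t / v) ≤
      ENNReal.ofReal (t ^ (1 - p) / (p - 1)) * ENNReal.ofReal C := by
  calc ∫⁻ v in Ici t, ENNReal.ofReal (v ^ (-p)) * tailIntegral p d (t / v)
      ≤ ∫⁻ v in Ici t, ENNReal.ofReal (v ^ (-p)) * ENNReal.ofReal C :=
        setLIntegral_mono' measurableSet_Ici fun v (hv : t ≤ v) => by
          rw [tailIntegral_of_le_one ((div_le_one₀ (ht.trans_le hv)).2 hv)]
          gcongr
    _ = ENNReal.ofReal (t ^ (1 - p) / (p - 1)) * ENNReal.ofReal C := by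
        rw [lintegral_mul_const' _ _ ENNReal.ofReal_ne_top, lintegral_Ici_rpow_neg hp ht]

theorem setLIntegral_Ioo_mul_tailIntegral_le {d k : ℕ} {C t : ℝ} (hC : 0 ≤ C)
    (h : ∀ τ, 1 ≤ τ →
      tailIntegral p d τ ≤ ENNReal.ofReal (C * τ ^ (1 - p) * (1 + log τ) ^ k))
    (ht : 1 ≤ t) :
    ∫⁻ v in Ioo 1 t, ENNReal.ofReal (v ^ (-p)) * tailIntegral p d (t / v) ≤
      ENNReal.ofReal (log t) * ENNReal.ofReal (C * t ^ (1 - p) * (1 + log t) ^ k) := by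
  rw [← lintegral_Ioo_one_inv ht, ← lintegral_mul_const' _ _ ENNReal.ofReal_ne_top]
  refine setLIntegral_mono' measurableSet_Ioo fun v hv => ?_
  have hv0 : 0 < v := zero_lt_one.trans hv.1
  have htv : 1 ≤ t / v := (one_le_div₀ hv0).2 hv.2.le
  have hlog : log (t / v) ≤ log t :=
    Real.log_le_log (by linarith) (div_le_self (by linarith) hv.1.le)
  calc ENNReal.ofReal (v ^ (-p)) * tailIntegral p d (t / v)
      ≤ ENNReal.ofReal (v ^ (-p)) *
        ENNReal.ofReal (C * (t / v) ^ (1 - p) * (1 + log (t / v)) ^ k) := by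
        gcongr; exact h _ htv
    _ ≤ ENNReal.ofReal (C * (v ^ (-p) * (t / v) ^ (1 - p)) * (1 + log t) ^ k) := by
        rw [← ENNReal.ofReal_mul (by positivity), mul_left_comm C, mul_assoc (v ^ (-p))]
        gcongr
        linarith [Real.log_nonneg htv]
    _ = ENNReal.ofReal v⁻¹ * ENNReal.ofReal (C * t ^ (1 - p) * (1 + log t) ^ k) := by
        rw [← ENNReal.ofReal_mul (by positivity), rpow_neg_mul_div_rpow_one_sub hv0 (by linarith)]
        ring_nf

theorem tailIntegral_succ_le_of_le (hp : 1 < p) {d k : ℕ} {C : ℝ} (hC : 0 ≤ C)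
    (h : ∀ τ, 1 ≤ τ →
      tailIntegral p d τ ≤ ENNReal.ofReal (C * τ ^ (1 - p) * (1 + log τ) ^ k))
    {t : ℝ} (ht : 1 ≤ t) :
    tailIntegral p (d + 1) t ≤
      ENNReal.ofReal ((2 + 2 / (p - 1)) * C * t ^ (1 - p) * (1 + log t) ^ (k + 1)) := by
  have hlog : 0 ≤ log t := Real.log_nonneg ht
  have hta : 0 ≤ C * t ^ (1 - p) := mul_nonneg hC (Real.rpow_nonneg (by linarith) _)
  have hq : 0 ≤ 2 / (p - 1) := div_nonneg zero_le_two (by linarith)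
  have hLk : 1 ≤ (1 + log t) ^ k := one_le_pow₀ (by linarith)
  have hIoo : Ioi (1 : ℝ) \ Ici t = Ioo 1 t := by ext v; simp [mem_Ioo]
  calc tailIntegral p (d + 1) t
      ≤ 2 * (ENNReal.ofReal (t ^ (1 - p) / (p - 1)) * ENNReal.ofReal C +
          ENNReal.ofReal (log t) * ENNReal.ofReal (C * t ^ (1 - p) * (1 + log t) ^ k)) := by
        rw [tailIntegral_succ, ← lintegral_inter_add_sdiff _ _ measurableSet_Ici, hIoo]
        gcongr
        · exact (lintegral_mono_set inter_subset_right).trans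
            (setLIntegral_Ici_mul_tailIntegral_le hp (by simpa using h 1 le_rfl) (by linarith))
        · exact setLIntegral_Ioo_mul_tailIntegral_le hC h ht
    _ = ENNReal.ofReal (2 / (p - 1) * (C * t ^ (1 - p)) +
          2 * log t * (C * t ^ (1 - p) * (1 + log t) ^ k)) := by
        rw [← ENNReal.ofReal_mul (by positivity), ← ENNReal.ofReal_mul hlog,
          ← ENNReal.ofReal_add (by positivity) (by positivity), ← ENNReal.ofReal_ofNat 2,
          ← ENNReal.ofReal_mul zero_le_two]
        ring_nf
    _ ≤ _ := by
        refine ENNReal.ofReal_le_ofReal ?_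
        rw [pow_succ]
        nlinarith [mul_le_mul_of_nonneg_left hLk (mul_nonneg hq hta), mul_nonneg hlog hta,
          mul_nonneg (mul_nonneg hlog hta) (sub_nonneg.2 hLk), mul_nonneg (mul_nonneg hlog hta) hq]

theorem tailIntegral_succ_le (hp : 1 < p) (d : ℕ) {t : ℝ} (ht : 1 ≤ t) :
    tailIntegral p (d + 1) t ≤
      ENNReal.ofReal ((2 + 2 / (p - 1)) ^ (d + 1) * t ^ (1 - p) * (1 + log t) ^ d) := by
  induction d generalizing t with
  | zero =>
    refine (tailIntegral_one_le hp ht).trans (ENNReal.ofReal_le_ofReal ?_)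
    have : 0 ≤ t ^ (1 - p) := Real.rpow_nonneg (by linarith) _
    nlinarith
  | succ d ih =>
    refine (tailIntegral_succ_le_of_le hp (by positivity) (fun τ hτ => ih hτ) ht).trans_eq ?_
    ring_nf

theorem tailIntegral_le (hp : 1 < p) (d : ℕ) {t : ℝ} (ht : 1 ≤ t) :
    tailIntegral p d t ≤
      ENNReal.ofReal ((2 + 2 / (p - 1)) ^ d * t ^ (1 - p) * (1 + log t) ^ (d - 1)) := by
  cases d with
  | zero =>
    rw [tailIntegral_zero]
    split_ifs with ht1
    · simp [le_antisymm ht1 ht]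
    · exact zero_le
  | succ d => simpa using tailIntegral_succ_le hp d ht

theorem one_add_abs_pow_le (r : ℕ) (u : ℝ) :
    (1 + |u|) ^ (2 * r) ≤ 4 ^ r * ∑ k ∈ Finset.range (r + 1), |2 * π * u| ^ (2 * k) := by
  have hmax : max 1 |u| ^ (2 * r) ≤ ∑ k ∈ Finset.range (r + 1), |2 * π * u| ^ (2 * k) := by
    have hnn : ∀ k ∈ Finset.range (r + 1), 0 ≤ |2 * π * u| ^ (2 * k) :=
      fun _ _ => by positivity
    rcases le_total |u| 1 with hu | hu
    · rw [max_eq_left hu, one_pow]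
      simpa using Finset.single_le_sum hnn (Finset.mem_range.2 (Nat.succ_pos r))
    · rw [max_eq_right hu]
      refine le_trans (pow_le_pow_left₀ (abs_nonneg u) ?_ _)
        (Finset.single_le_sum hnn (Finset.self_mem_range_succ r))
      rw [abs_mul, abs_of_pos Real.two_pi_pos]
      nlinarith [Real.pi_gt_three, abs_nonneg u]
  calc (1 + |u|) ^ (2 * r) ≤ (2 * max 1 |u|) ^ (2 * r) := by
        gcongr; linarith [le_max_left 1 |u|, le_max_right 1 |u|]
    _ = 4 ^ r * max 1 |u| ^ (2 * r) := by rw [mul_pow, pow_mul]; norm_num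
    _ ≤ _ := by gcongr

theorem inv_hrw_le (r : ℕ) {d : ℕ} (x : Fin d → ℝ) :
    (hrw r x)⁻¹ ≤ 4 ^ (r * d) * ∏ j, (1 + |x j|) ^ (-(2 * r : ℝ)) := by
  rw [hrw, ← Finset.prod_inv_distrib, pow_mul, ← Fin.prod_const, ← Finset.prod_mul_distrib]
  refine Finset.prod_le_prod (fun j _ => by positivity) fun j _ => ?_
  rw [show (2 * r : ℝ) = ((2 * r : ℕ) : ℝ) by push_cast; ring, Real.rpow_neg (by positivity),
    Real.rpow_natCast, ← div_eq_mul_inv, ← inv_div]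
  exact inv_anti₀ (by positivity)
    ((div_le_iff₀' (by positivity)).2 (one_add_abs_pow_le r (x j)))

theorem setLIntegral_inv_hrw_le (r : ℕ) {d : ℕ} (t : ℝ) :
    ∫⁻ x in {x : Fin d → ℝ | t ≤ ∏ j, |x j|}, ENNReal.ofReal (hrw r x)⁻¹ ≤
      ENNReal.ofReal (4 ^ (r * d)) * tailIntegral (2 * r) d t := by
  have hsub : {x : Fin d → ℝ | t ≤ ∏ j, |x j|} ⊆ {x | t ≤ ∏ j, (1 + |x j|)} :=
    fun x (hx : t ≤ _) => hx.trans <| Finset.prod_le_prod (fun j _ => abs_nonneg _)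
      fun j _ => le_add_of_nonneg_left zero_le_one
  calc ∫⁻ x in {x : Fin d → ℝ | t ≤ ∏ j, |x j|}, ENNReal.ofReal (hrw r x)⁻¹
      ≤ ∫⁻ x in {x : Fin d → ℝ | t ≤ ∏ j, (1 + |x j|)}, ENNReal.ofReal (4 ^ (r * d)) *
          ∏ j, ENNReal.ofReal ((1 + |x j|) ^ (-(2 * r : ℝ))) := by
        refine (lintegral_mono_set hsub).trans (lintegral_mono fun x => ?_)
        rw [← ENNReal.ofReal_prod_of_nonneg fun j _ => by positivity,
          ← ENNReal.ofReal_mul (by positivity)]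
        exact ENNReal.ofReal_le_ofReal (inv_hrw_le r x)
    _ = ENNReal.ofReal (4 ^ (r * d)) * tailIntegral (2 * r) d t := by
        rw [lintegral_const_mul' _ _ ENNReal.ofReal_ne_top, tailIntegral, tailIntegrand,
          lintegral_indicator (measurableSet_le_prod_one_add_abs d t)]

theorem one_add_log_le {t : ℝ} (ht : 2 ≤ t) :
    1 + log t ≤ (1 + (log 2)⁻¹) * log t := by
  have h : 1 ≤ log t / log 2 :=
    (one_le_div (Real.log_pos one_lt_two)).2 (Real.log_le_log two_pos ht)
  rw [add_mul, one_mul, inv_mul_eq_div]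
  linarith

end HyperbolicCross

open HyperbolicCross in
theorem stmt13_general (d r : ℕ) (hr1 : 1 ≤ r) :
    ∃ c > (0 : ℝ), ∀ n : ℕ, 2 ≤ n →
      (∫ x in {x : Fin d → ℝ | (n : ℝ) ≤ ∏ j, |x j|}, (hrw r x)⁻¹)
        ≤ c * (n : ℝ) ^ ((1 : ℝ) - 2 * r) * Real.log n ^ (d - 1) := by
  have hp : 1 < (2 * r : ℝ) := by norm_cast; omega
  set K : ℝ := 4 ^ (r * d) * (2 + 2 / (2 * r - 1)) ^ d
  refine ⟨K * (1 + (Real.log 2)⁻¹) ^ (d - 1), by positivity, fun n hn => ?_⟩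
  have hn2 : (2 : ℝ) ≤ n := by exact_mod_cast hn
  have hnonneg : 0 ≤ fun x : Fin d → ℝ => (hrw r x)⁻¹ := fun x =>
    inv_nonneg.2 (Finset.prod_nonneg fun j _ => Finset.sum_nonneg fun k _ => by positivity)
  have hmeas : Measurable fun x : Fin d → ℝ => (hrw r x)⁻¹ := by unfold hrw; fun_prop
  rw [integral_eq_lintegral_of_nonneg_ae (ae_of_all _ hnonneg) hmeas.aestronglyMeasurable]
  refine ENNReal.toReal_le_of_le_ofReal (by positivity) ?_
  calc _ ≤ ENNReal.ofReal (4 ^ (r * d)) * tailIntegral (2 * r) d n := setLIntegral_inv_hrw_le r n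
    _ ≤ ENNReal.ofReal (4 ^ (r * d)) * ENNReal.ofReal ((2 + 2 / (2 * r - 1)) ^ d *
          (n : ℝ) ^ (1 - 2 * r : ℝ) * (1 + Real.log n) ^ (d - 1)) := by
        gcongr; exact tailIntegral_le hp d (by linarith)
    _ ≤ _ := by
        rw [← ENNReal.ofReal_mul (by positivity)]
        refine ENNReal.ofReal_le_ofReal ?_
        calc _ = K * (n : ℝ) ^ (1 - 2 * r : ℝ) * (1 + Real.log n) ^ (d - 1) := by ring
          _ ≤ K * (n : ℝ) ^ (1 - 2 * r : ℝ) *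
                ((1 + (Real.log 2)⁻¹) * Real.log n) ^ (d - 1) := by
              gcongr
              exact one_add_log_le hn2
          _ = _ := by rw [mul_pow]; ring

/-- `∫_{D_n} h_r(x)^{−1} dx ≤ c n^{1−2r} (log n)^{d−1}`. -/
theorem stmt13 (d r : ℕ) (hr1 : 1 ≤ r) (hd : 1 ≤ d) :
    ∃ c > (0 : ℝ), ∀ n : ℕ, 2 ≤ n →
      (∫ x in {x : Fin d → ℝ | (n : ℝ) ≤ ∏ j, |x j|}, (hrw r x)⁻¹)
        ≤ c * (n : ℝ) ^ ((1 : ℝ) - 2 * r) * Real.log n ^ (d - 1) :=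
  stmt13_general d r hr1
end
end
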